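/- arXiv:2006.09063 — 2 statements merged into one kernel-verified Lean document; each statement's English description precedes it below -/
import Mathlib

section
/- A rank-one convex function g : ℝ^{m×n} → ℝ with g([-2,2]^{mn}) ⊆ [-1,1] satisfies the Lipschitz bound Lip(g, [-1,1]^{mn}) ≤ min{m,n} · osc(g, [-2,2]^{mn}) ≤ 2·min{m,n}, where osc denotes the oscillation (sup minus inf) on the set. -/
open Matrix Set

attribute [local instance] Matrix.frobeniusNormedAddCommGroup

/-- A function on `m × n` real matrices is rank-one convex if it is convex along
all rank-one lines. -/
def RankOneConvex {m n : ℕ} (f : Matrix (Fin m) (Fin n) ℝ → ℝ) : Prop :=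
  ∀ A B : Matrix (Fin m) (Fin n) ℝ, B.rank ≤ 1 →
    ConvexOn ℝ Set.univ fun t : ℝ => f (A + t • B)

/-- The cube `[-r, r]^{mn}` of matrices. -/
def cube (m n : ℕ) (r : ℝ) : Set (Matrix (Fin m) (Fin n) ℝ) :=
  {A | ∀ j k, A j k ∈ Set.Icc (-r) r}

/-! Along a rank-one line `t ↦ X + t • (Y - X)` the function is convex, so its slope on `[0, 1]`
is squeezed between its slopes on `[-δ, 0]` and `[1, 1 + δ]`; with `δ = ρ / ‖Y - X‖` the outer
points stay in the cube enlarged by `ρ`, so `|g Y - g X| ≤ osc / ρ · ‖Y - X‖`. A general pair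
`A, B` is joined inside the cube by replacing the rows of `A` with those of `B` one at a time
(or the columns, after transposing): `min m n` rank-one steps, each of norm at most `‖A - B‖`. -/

attribute [local instance] Matrix.frobeniusNormSMulClass

theorem ConvexOn.abs_sub_le_of_mapsTo_Icc {f : ℝ → ℝ} (hf : ConvexOn ℝ univ f)
    {a b δ M' M : ℝ} (hab : a ≤ b) (hδ : 0 < δ)
    (hbd : MapsTo f (Icc (a - δ) (b + δ)) (Icc M' M)) :
    |f b - f a| ≤ (M - M') / δ * (b - a) := by
  rcases hab.eq_or_lt with rfl | hab
  · simp
  have bound (t : ℝ) (h₁ : a - δ ≤ t) (h₂ : t ≤ b + δ) : M' ≤ f t ∧ f t ≤ M := hbd ⟨h₁, h₂⟩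
  obtain ⟨hl₁, hu₁⟩ := bound (a - δ) le_rfl (by linarith)
  obtain ⟨hl₂, hu₂⟩ := bound a (by linarith) (by linarith)
  obtain ⟨hl₃, hu₃⟩ := bound b (by linarith) (by linarith)
  obtain ⟨hl₄, hu₄⟩ := bound (b + δ) (by linarith) le_rfl
  have right := hf.slope_mono_adjacent (mem_univ a) (mem_univ (b + δ)) hab
    (lt_add_of_pos_right b hδ)
  have left := hf.slope_mono_adjacent (mem_univ (a - δ)) (mem_univ b)
    (sub_lt_self a hδ) hab
  simp only [add_sub_cancel_left, sub_sub_cancel] at right left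
  have hup : (f b - f a) / (b - a) ≤ (M - M') / δ :=
    right.trans (div_le_div_of_nonneg_right (by linarith) hδ.le)
  have hlo : -((M - M') / δ) ≤ (f b - f a) / (b - a) := by
    rw [← neg_div]
    exact (div_le_div_of_nonneg_right (by linarith) hδ.le).trans left
  have hba : 0 < b - a := sub_pos.mpr hab
  have := abs_le.mpr ⟨hlo, hup⟩
  rwa [abs_div, abs_of_pos hba, div_le_iff₀ hba] at this

theorem norm_entry_le_frobenius_norm {ι κ α : Type*} [Fintype ι] [Fintype κ]
    [NormedAddCommGroup α] (C : Matrix ι κ α) (j : ι) (k : κ) :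
    ‖C j k‖ ≤ ‖C‖ :=
  (PiLp.norm_apply_le (WithLp.toLp 2 (C j)) k).trans
    (PiLp.norm_apply_le (WithLp.toLp 2 fun i => WithLp.toLp 2 (C i)) j)

theorem frobenius_norm_le_of_norm_entry_le {ι κ α : Type*} [Fintype ι] [Fintype κ]
    [NormedAddCommGroup α] {C D : Matrix ι κ α}
    (h : ∀ j k, ‖C j k‖ ≤ ‖D j k‖) : ‖C‖ ≤ ‖D‖ := by
  rw [frobenius_norm_def, frobenius_norm_def]
  gcongr with j _ k _
  exact h j k

theorem convex_cube (m n : ℕ) (r : ℝ) : Convex ℝ (cube m n r) :=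
  fun _ hA _ hB _ _ ha hb hab j k => convex_Icc (-r) r (hA j k) (hB j k) ha hb hab

theorem add_mem_cube_of_norm_le {m n : ℕ} {r ρ : ℝ} {P D : Matrix (Fin m) (Fin n) ℝ}
    (hP : P ∈ cube m n r) (hD : ‖D‖ ≤ ρ) : P + D ∈ cube m n (r + ρ) := by
  intro j k
  have hPjk := hP j k
  have hDjk := abs_le.mp ((norm_entry_le_frobenius_norm D j k).trans hD)
  simp only [mem_Icc, Matrix.add_apply] at hPjk ⊢
  constructor <;> linarith

theorem RankOneConvex.abs_sub_le_of_rank_le_one {m n : ℕ}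
    {g : Matrix (Fin m) (Fin n) ℝ → ℝ} (hg : RankOneConvex g) {r ρ M' M : ℝ} (hρ : 0 < ρ)
    (hbd : MapsTo g (cube m n (r + ρ)) (Icc M' M)) {X Y : Matrix (Fin m) (Fin n) ℝ}
    (hX : X ∈ cube m n r) (hY : Y ∈ cube m n r) (hXY : (Y - X).rank ≤ 1) :
    |g Y - g X| ≤ (M - M') / ρ * ‖Y - X‖ := by
  rcases (norm_nonneg (Y - X)).eq_or_lt with hC | hC
  · obtain rfl : Y = X := sub_eq_zero.mp (norm_eq_zero.mp hC.symm)
    simp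
  set δ := ρ / ‖Y - X‖
  have hδ : 0 < δ := div_pos hρ hC
  have hδC : ‖δ • (Y - X)‖ = ρ := by
    rw [norm_smul, Real.norm_of_nonneg hδ.le, div_mul_cancel₀ ρ hC.ne']
  let L := AffineMap.lineMap (k := ℝ) X Y
  have hL (t : ℝ) : L t = X + t • (Y - X) := by
    rw [AffineMap.lineMap_apply_module', add_comm]
  have hlo : L (-δ) ∈ cube m n (r + ρ) := by
    rw [hL, neg_smul]
    exact add_mem_cube_of_norm_le hX (by rw [norm_neg, hδC])
  have hhi : L (1 + δ) ∈ cube m n (r + ρ) := by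
    rw [hL, add_smul, one_smul, ← add_assoc, add_sub_cancel]
    exact add_mem_cube_of_norm_le hY hδC.le
  have hline : Icc (-δ) (1 + δ) ⊆ L ⁻¹' cube m n (r + ρ) :=
    ((convex_cube m n _).affine_preimage L).ordConnected.out hlo hhi
  have hconv : ConvexOn ℝ univ (g ∘ L) := by
    simpa only [Function.comp_def, hL] using hg X (Y - X) hXY
  have h1 := hconv.abs_sub_le_of_mapsTo_Icc zero_le_one hδ
    (by rw [zero_sub]; exact fun t ht => hbd (hline ht))
  simp only [Function.comp_apply, L, AffineMap.lineMap_apply_zero,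
    AffineMap.lineMap_apply_one, sub_zero, mul_one] at h1
  rwa [div_div_eq_mul_div, mul_div_right_comm] at h1

theorem cube_mono {m n : ℕ} {r s : ℝ} (h : r ≤ s) : cube m n r ⊆ cube m n s :=
  fun _ hA j k => Icc_subset_Icc (neg_le_neg h) h (hA j k)

theorem transpose_mem_cube {m n : ℕ} {r : ℝ} {A : Matrix (Fin m) (Fin n) ℝ} :
    Aᵀ ∈ cube n m r ↔ A ∈ cube m n r :=
  ⟨fun h j k => h k j, fun h j k => h k j⟩

theorem norm_vecMulVec_single_le {ι κ α : Type*} [Fintype ι] [Fintype κ] [DecidableEq ι]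
    [NormedRing α] (C : Matrix ι κ α) (i : ι) :
    ‖vecMulVec (Pi.single i 1) (C i)‖ ≤ ‖C‖ := by
  refine frobenius_norm_le_of_norm_entry_le fun j k => ?_
  rcases eq_or_ne j i with rfl | hj
  · simp [vecMulVec_apply]
  · simp [vecMulVec_apply, hj]

def mixRows {α : Type*} {m n : ℕ} (A B : Matrix (Fin m) (Fin n) α) (i : ℕ) :
    Matrix (Fin m) (Fin n) α :=
  of fun j k => if (j : ℕ) < i then B j k else A j k

section mixRows

variable {α : Type*} {m n : ℕ} (A B : Matrix (Fin m) (Fin n) α)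

theorem mixRows_zero : mixRows A B 0 = A := by
  ext j k
  simp [mixRows]

theorem mixRows_of_le {i : ℕ} (hi : m ≤ i) : mixRows A B i = B := by
  ext j k
  simp [mixRows, j.isLt.trans_le hi]

theorem mixRows_succ_sub [Ring α] {i : ℕ} (hi : i < m) :
    mixRows A B (i + 1) - mixRows A B i = vecMulVec (Pi.single ⟨i, hi⟩ 1) ((B - A) ⟨i, hi⟩) := by
  ext j k
  rcases lt_trichotomy (j : ℕ) i with h | h | h
  · have hj : j ≠ ⟨i, hi⟩ := fun e => h.ne (congrArg Fin.val e)
    simp [mixRows, vecMulVec_apply, h, h.le, hj]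
  · obtain rfl : j = ⟨i, hi⟩ := Fin.ext h
    simp [mixRows, vecMulVec_apply]
  · have hj : j ≠ ⟨i, hi⟩ := fun e => h.ne' (congrArg Fin.val e)
    simp [mixRows, vecMulVec_apply, not_le.mpr h, not_lt.mpr h.le, hj]

theorem mixRows_mem_cube {A B : Matrix (Fin m) (Fin n) ℝ} {r : ℝ} (hA : A ∈ cube m n r)
    (hB : B ∈ cube m n r) (i : ℕ) : mixRows A B i ∈ cube m n r := by
  intro j k
  by_cases h : (j : ℕ) < i
  · simpa [mixRows, h] using hB j k
  · simpa [mixRows, h] using hA j k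

end mixRows

theorem RankOneConvex.abs_sub_le_card_mul {m n : ℕ} {g : Matrix (Fin m) (Fin n) ℝ → ℝ}
    (hg : RankOneConvex g) {r ρ M' M : ℝ} (hρ : 0 < ρ)
    (hbd : MapsTo g (cube m n (r + ρ)) (Icc M' M)) {A B : Matrix (Fin m) (Fin n) ℝ}
    (hA : A ∈ cube m n r) (hB : B ∈ cube m n r) :
    |g A - g B| ≤ m * ((M - M') / ρ) * ‖A - B‖ := by
  have hgA := hbd (cube_mono (le_add_of_nonneg_right hρ.le) hA)
  have hK : 0 ≤ (M - M') / ρ := div_nonneg (sub_nonneg.mpr (hgA.1.trans hgA.2)) hρ.le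
  have step (i : ℕ) (hi : i < m) :
      |g (mixRows A B (i + 1)) - g (mixRows A B i)| ≤ (M - M') / ρ * ‖A - B‖ := by
    refine (hg.abs_sub_le_of_rank_le_one hρ hbd (mixRows_mem_cube hA hB i)
      (mixRows_mem_cube hA hB (i + 1)) ?_).trans (mul_le_mul_of_nonneg_left ?_ hK)
    · rw [mixRows_succ_sub A B hi]
      exact rank_vecMulVec_le _ _
    · rw [mixRows_succ_sub A B hi, ← norm_neg (A - B), neg_sub]
      exact norm_vecMulVec_single_le _ _
  calc |g A - g B|
      = |∑ i ∈ Finset.range m, (g (mixRows A B (i + 1)) - g (mixRows A B i))| := by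
        rw [Finset.sum_range_sub (fun i => g (mixRows A B i)), mixRows_zero,
          mixRows_of_le A B le_rfl, abs_sub_comm]
    _ ≤ ∑ i ∈ Finset.range m, |g (mixRows A B (i + 1)) - g (mixRows A B i)| :=
        Finset.abs_sum_le_sum_abs _ _
    _ ≤ ∑ i ∈ Finset.range m, (M - M') / ρ * ‖A - B‖ :=
        Finset.sum_le_sum fun i hi => step i (Finset.mem_range.mp hi)
    _ = m * ((M - M') / ρ) * ‖A - B‖ := by
        rw [Finset.sum_const, Finset.card_range, nsmul_eq_mul, mul_assoc]

theorem RankOneConvex.comp_transpose {m n : ℕ} {g : Matrix (Fin m) (Fin n) ℝ → ℝ}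
    (hg : RankOneConvex g) : RankOneConvex fun Z : Matrix (Fin n) (Fin m) ℝ => g Zᵀ := by
  intro P Q hQ
  simpa only [transpose_add, transpose_smul] using hg Pᵀ Qᵀ (by rwa [rank_transpose])

theorem RankOneConvex.abs_sub_le_min_mul {m n : ℕ} {g : Matrix (Fin m) (Fin n) ℝ → ℝ}
    (hg : RankOneConvex g) {r ρ M' M : ℝ} (hρ : 0 < ρ)
    (hbd : MapsTo g (cube m n (r + ρ)) (Icc M' M)) {A B : Matrix (Fin m) (Fin n) ℝ}
    (hA : A ∈ cube m n r) (hB : B ∈ cube m n r) :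
    |g A - g B| ≤ (min m n : ℝ) * ((M - M') / ρ) * ‖A - B‖ := by
  rcases le_total m n with h | h
  · rw [min_eq_left (by exact_mod_cast h)]
    exact hg.abs_sub_le_card_mul hρ hbd hA hB
  · rw [min_eq_right (by exact_mod_cast h)]
    have hbd_transpose :
        MapsTo (fun Z : Matrix (Fin n) (Fin m) ℝ => g Zᵀ) (cube n m (r + ρ)) (Icc M' M) :=
      fun Z hZ => hbd (transpose_mem_cube.mpr hZ)
    simpa only [transpose_transpose, ← transpose_sub, frobenius_norm_transpose] using
      hg.comp_transpose.abs_sub_le_card_mul hρ hbd_transpose (transpose_mem_cube.mpr hA)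
        (transpose_mem_cube.mpr hB)

theorem stmt0_general {m n : ℕ}
    (g : Matrix (Fin m) (Fin n) ℝ → ℝ) (hg : RankOneConvex g)
    (hrange : ∀ A ∈ cube m n 2, g A ∈ Set.Icc (-1 : ℝ) 1) :
    (∀ A ∈ cube m n 1, ∀ B ∈ cube m n 1,
      |g A - g B| ≤ (min m n : ℝ) *
        (sSup (g '' cube m n 2) - sInf (g '' cube m n 2)) * ‖A - B‖) ∧
    (min m n : ℝ) * (sSup (g '' cube m n 2) - sInf (g '' cube m n 2))
      ≤ 2 * (min m n : ℝ) := by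
  have himage : g '' cube m n 2 ⊆ Icc (-1) 1 := image_subset_iff.mpr hrange
  have hne : (g '' cube m n 2).Nonempty := ⟨g 0, 0, fun _ _ => by norm_num, rfl⟩
  have hbdd_above : BddAbove (g '' cube m n 2) := ⟨1, fun _ hx => (himage hx).2⟩
  have hbdd_below : BddBelow (g '' cube m n 2) := ⟨-1, fun _ hx => (himage hx).1⟩
  have hbd : MapsTo g (cube m n 2) (Icc (sInf (g '' cube m n 2)) (sSup (g '' cube m n 2))) :=
    fun Z hZ => ⟨csInf_le hbdd_below (mem_image_of_mem g hZ),
      le_csSup hbdd_above (mem_image_of_mem g hZ)⟩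
  have hosc : sSup (g '' cube m n 2) - sInf (g '' cube m n 2) ≤ 2 := by
    linarith [csSup_le hne fun _ hx => (himage hx).2, le_csInf hne fun _ hx => (himage hx).1]
  refine ⟨fun A hA B hB => ?_, ?_⟩
  · simpa using hg.abs_sub_le_min_mul one_pos (by rwa [one_add_one_eq_two]) hA hB
  · rw [mul_comm 2]
    exact mul_le_mul_of_nonneg_left hosc (by positivity)

theorem stmt0 {m n : ℕ} (hm : 2 ≤ m) (hn : 2 ≤ n)
    (g : Matrix (Fin m) (Fin n) ℝ → ℝ) (hg : RankOneConvex g)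
    (hrange : ∀ A ∈ cube m n 2, g A ∈ Set.Icc (-1 : ℝ) 1) :
    (∀ A ∈ cube m n 1, ∀ B ∈ cube m n 1,
      |g A - g B| ≤ (min m n : ℝ) *
        (sSup (g '' cube m n 2) - sInf (g '' cube m n 2)) * ‖A - B‖) ∧
    (min m n : ℝ) * (sSup (g '' cube m n 2) - sInf (g '' cube m n 2))
      ≤ 2 * (min m n : ℝ) :=
  stmt0_general g hg hrange
end

section
/- If f : ℝ^{m×n} → ℝ is quasiconvex, then f is N-wave quasiconvex for every N ∈ ℕ: for all A ∈ ℝ^{m×n} and all (a_i, n_i, c_i)_{i=1}^N ∈ ℝ^m × ℤ^n × ℝ, f(A) ≤ Σ_{ε ∈ {-1,1}^N} ν_ε f(A + X_ε), where ν_ε and X_ε are the weights and support points of the N-wave configuration. -/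
open MeasureTheory Matrix

/-- The 1-periodic sawtooth function: `s(t) = t` on `[0,1/2]`, `s(t) = 1 - t` on `[1/2,1]`. -/
noncomputable def sawtooth (t : ℝ) : ℝ := min (Int.fract t) (1 - Int.fract t)

/-- The 1-periodic Haar function `h = s'`. -/
noncomputable def haar (t : ℝ) : ℝ := if Int.fract t < 1 / 2 then 1 else -1

/-- Dot product of a real vector with an integer vector. -/
def idot {n : ℕ} (x : Fin n → ℝ) (v : Fin n → ℤ) : ℝ := ∑ j, x j * (v j : ℝ)

/-- The fundamental domain `[0,1)^n` of the torus `𝕋^n = ℝ^n/ℤ^n`. -/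
def unitBox (n : ℕ) : Set (Fin n → ℝ) := Set.univ.pi fun _ => Set.Ico (0 : ℝ) 1

/-- The sign `±1` associated to a boolean. -/
def sgn (b : Bool) : ℝ := if b then 1 else -1

/-- The gradient matrix `Dφ(x)` of a map `φ : ℝⁿ → ℝᵐ`. -/
noncomputable def gradMatrix {m n : ℕ} (φ : (Fin n → ℝ) → Fin m → ℝ)
    (x : Fin n → ℝ) : Matrix (Fin m) (Fin n) ℝ :=
  Matrix.of fun j k => fderiv ℝ φ x (Pi.single k 1) j

/-- `f` is quasiconvex: Jensen's inequality holds for the gradient of every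
Lipschitz, ℤⁿ-periodic map `φ`, integrated over the fundamental domain of the torus. -/
noncomputable def QuasiconvexFn {m n : ℕ} (f : Matrix (Fin m) (Fin n) ℝ → ℝ) : Prop :=
  ∀ (A : Matrix (Fin m) (Fin n) ℝ) (φ : (Fin n → ℝ) → Fin m → ℝ) (Kc : NNReal),
    LipschitzWith Kc φ →
    (∀ (x : Fin n → ℝ) (k : Fin n → ℤ), φ (x + fun j => (k j : ℝ)) = φ x) →
    f A ≤ ∫ x in unitBox n, f (A + gradMatrix φ x)

/-!
The `N`-wave potential `φ(x) = ∑ᵢ s(x·nᵢ + cᵢ) aᵢ` is Lipschitz and `ℤⁿ`-periodic, hence an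
admissible test map in the definition of quasiconvexity. Away from the null set where a phase
`x·nᵢ + cᵢ` with `nᵢ ≠ 0` lies in `½ℤ`, `φ` is differentiable with `Dφ(x) = X_{ε(x)}`, where
`ε(x)` records the values of `h` at the phases. So `f(A + Dφ)` takes the value `f(A + X_ε)` on
the set of measure `ν_ε`, and its integral over the unit box is `∑_ε ν_ε f(A + X_ε)`.
-/

open scoped NNReal

lemma sawtooth_add_intCast (t : ℝ) (z : ℤ) : sawtooth (t + z) = sawtooth t := by
  rw [sawtooth, sawtooth, Int.fract_add_intCast]

lemma sawtooth_le_abs_sub_intCast (t : ℝ) (k : ℤ) : sawtooth t ≤ |t - k| := by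
  have hfract := Int.self_sub_floor t
  rcases le_or_gt (k : ℝ) t with h | h
  · have hk : (k : ℝ) ≤ ⌊t⌋ := by exact_mod_cast Int.le_floor.mpr h
    calc sawtooth t ≤ Int.fract t := min_le_left _ _
      _ ≤ |t - k| := by rw [abs_of_nonneg (by linarith)]; linarith
  · have hk : (⌊t⌋ : ℝ) + 1 ≤ k := by exact_mod_cast Int.floor_lt.mpr h
    calc sawtooth t ≤ 1 - Int.fract t := min_le_right _ _
      _ ≤ |t - k| := by rw [abs_of_neg (by linarith)]; linarith

lemma exists_sawtooth_eq_abs_sub_intCast (t : ℝ) : ∃ k : ℤ, sawtooth t = |t - k| := by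
  have hfract := Int.self_sub_floor t
  rcases le_total (Int.fract t) (1 - Int.fract t) with h | h
  · refine ⟨⌊t⌋, ?_⟩
    rw [sawtooth, min_eq_left h, abs_of_nonneg (by linarith [Int.fract_nonneg t]), hfract]
  · refine ⟨⌊t⌋ + 1, ?_⟩
    rw [sawtooth, min_eq_right h, abs_of_nonpos (by push_cast; linarith [Int.fract_lt_one t]),
      ← hfract]
    push_cast
    ring

lemma lipschitzWith_sawtooth : LipschitzWith 1 sawtooth :=
  LipschitzWith.of_le_add fun s t => by
    obtain ⟨k, hk⟩ := exists_sawtooth_eq_abs_sub_intCast t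
    calc sawtooth s ≤ |s - k| := sawtooth_le_abs_sub_intCast s k
      _ ≤ |s - t| + |t - k| := abs_sub_le s t k
      _ = sawtooth t + dist s t := by rw [hk, Real.dist_eq, add_comm]

lemma sawtooth_eq_sub_intCast {k : ℤ} {s : ℝ} (hs : s ∈ Set.Ico (k : ℝ) (k + 1 / 2)) :
    sawtooth s = s - k := by
  have hfloor : ⌊s⌋ = k := Int.floor_eq_iff.mpr ⟨hs.1, by linarith [hs.2]⟩
  rw [sawtooth, ← Int.self_sub_floor, hfloor, min_eq_left (by linarith [hs.2])]

lemma sawtooth_eq_intCast_add_one_sub {k : ℤ} {s : ℝ}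
    (hs : s ∈ Set.Ico ((k : ℝ) + 1 / 2) (k + 1)) : sawtooth s = k + 1 - s := by
  have hfloor : ⌊s⌋ = k := Int.floor_eq_iff.mpr ⟨by linarith [hs.1], hs.2⟩
  rw [sawtooth, ← Int.self_sub_floor, hfloor, min_eq_right (by linarith [hs.1])]
  ring

lemma hasDerivAt_sawtooth {t : ℝ} (h0 : Int.fract t ≠ 0) (hhalf : Int.fract t ≠ 1 / 2) :
    HasDerivAt sawtooth (haar t) t := by
  have hfract := Int.self_sub_floor t
  have hpos : 0 < Int.fract t := (Int.fract_nonneg t).lt_of_ne' h0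
  have hlt : Int.fract t < 1 := Int.fract_lt_one t
  by_cases h : Int.fract t < 1 / 2
  · have hmem : Set.Ioo (⌊t⌋ : ℝ) (⌊t⌋ + 1 / 2) ∈ nhds t :=
      Ioo_mem_nhds (by linarith) (by linarith)
    rw [haar, if_pos h]
    exact ((hasDerivAt_id t).sub_const _).congr_of_eventuallyEq <|
      Filter.eventually_of_mem hmem fun s hs => sawtooth_eq_sub_intCast (Set.Ioo_subset_Ico_self hs)
  · have hgt : 1 / 2 < Int.fract t := (not_lt.mp h).lt_of_ne' hhalf
    have hmem : Set.Ioo ((⌊t⌋ : ℝ) + 1 / 2) (⌊t⌋ + 1) ∈ nhds t :=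
      Ioo_mem_nhds (by linarith) (by linarith)
    rw [haar, if_neg h]
    exact ((hasDerivAt_id t).const_sub _).congr_of_eventuallyEq <|
      Filter.eventually_of_mem hmem fun s hs =>
        sawtooth_eq_intCast_add_one_sub (Set.Ioo_subset_Ico_self hs)

lemma countable_setOf_fract_add_eq (c : ℝ) :
    {t : ℝ | Int.fract (t + c) = 0 ∨ Int.fract (t + c) = 1 / 2}.Countable := by
  refine ((Set.countable_range fun z : ℤ => z - c).union
    (Set.countable_range fun z : ℤ => z + 1 / 2 - c)).mono ?_
  rintro t (h | h) <;> rw [← Int.self_sub_floor] at h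
  · exact Or.inl ⟨⌊t + c⌋, by linarith⟩
  · exact Or.inr ⟨⌊t + c⌋, by linarith⟩

lemma haar_eq_sgn (t : ℝ) : haar t = sgn (decide (Int.fract t < 1 / 2)) := by
  simp [haar, sgn]

lemma sgn_injective : Function.Injective sgn := by
  intro b b'; cases b <;> cases b' <;> norm_num [sgn]

lemma lipschitzWith_finset_sum {ι α E : Type*} [PseudoEMetricSpace α] [SeminormedAddCommGroup E]
    (s : Finset ι) {f : ι → α → E} {K : ι → ℝ≥0} (hf : ∀ i ∈ s, LipschitzWith (K i) (f i)) :
    LipschitzWith (∑ i ∈ s, K i) fun x => ∑ i ∈ s, f i x := by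
  classical
  induction s using Finset.induction_on with
  | empty => simpa using LipschitzWith.const (0 : E)
  | insert i s hi ih =>
    simp only [Finset.sum_insert hi]
    exact (hf i (Finset.mem_insert_self i s)).add
      (ih fun j hj => hf j (Finset.mem_insert_of_mem hj))

lemma gradMatrix_eq_of_hasFDerivAt {m n : ℕ} {φ : (Fin n → ℝ) → Fin m → ℝ} {x : Fin n → ℝ}
    {M : Matrix (Fin m) (Fin n) ℝ}
    (h : HasFDerivAt φ (LinearMap.toContinuousLinearMap (Matrix.toLin' M)) x) :
    gradMatrix φ x = M := by
  ext j k
  simp [gradMatrix, h.fderiv, Matrix.mulVec_single]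

lemma integral_comp_eq_sum_measureReal {α β E : Type*} [MeasurableSpace α] [MeasurableSpace β]
    [Fintype β] [MeasurableSingletonClass β] [NormedAddCommGroup E] [NormedSpace ℝ E]
    [CompleteSpace E] {μ : Measure α} [IsFiniteMeasure μ] {p : α → β} (hp : Measurable p)
    (g : β → E) : ∫ x, g (p x) ∂μ = ∑ b, μ.real (p ⁻¹' {b}) • g b := by
  rw [← integral_map hp.aemeasurable (AEStronglyMeasurable.of_discrete),
    integral_fintype Integrable.of_finite]
  simp only [map_measureReal_apply hp (measurableSet_singleton _)]

section Idot

variable {n : ℕ}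

noncomputable def idotCLM (v : Fin n → ℤ) : (Fin n → ℝ) →L[ℝ] ℝ :=
  LinearMap.toContinuousLinearMap
    { toFun := fun x => idot x v
      map_add' := fun x y => by simp only [idot, Pi.add_apply, add_mul, Finset.sum_add_distrib]
      map_smul' := fun r x => by simp only [idot, Pi.smul_apply, smul_eq_mul, mul_assoc,
        ← Finset.mul_sum, RingHom.id_apply] }

@[simp]
lemma idotCLM_apply (v : Fin n → ℤ) (x : Fin n → ℝ) : idotCLM v x = idot x v := rfl

lemma idot_single (v : Fin n → ℤ) (k : Fin n) : idot (Pi.single k 1) v = v k := by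
  simp [idot, Pi.single_apply]

lemma idot_add_intCast (x : Fin n → ℝ) (k v : Fin n → ℤ) :
    idot (x + fun j => (k j : ℝ)) v = idot x v + ((∑ j, k j * v j : ℤ) : ℝ) := by
  simp only [idot, Pi.add_apply, add_mul, Finset.sum_add_distrib]
  push_cast
  rfl

lemma volume_idot_eq_zero {v : Fin n → ℤ} (hv : v ≠ 0) (r : ℝ) :
    volume {x : Fin n → ℝ | idot x v = r} = 0 := by
  obtain ⟨k, hk⟩ := Function.ne_iff.mp hv
  have hlevel : {x : Fin n → ℝ | idot x v = r} =
      (AffineSubspace.comap (idotCLM v).toLinearMap.toAffineMap (AffineSubspace.mk' r ⊥) :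
        Set (Fin n → ℝ)) := by
    ext x
    simp [AffineSubspace.mem_mk', sub_eq_zero]
  rw [hlevel]
  refine Measure.addHaar_affineSubspace _ _ fun htop => hk ?_
  have hmem : ∀ x : Fin n → ℝ, idot x v = r := fun x => by
    simpa [AffineSubspace.mem_mk', sub_eq_zero] using
      (SetLike.ext_iff.1 htop x).2 (AffineSubspace.mem_top ℝ _ x)
  have := hmem (Pi.single k 1)
  rw [idot_single, ← hmem 0] at this
  simpa [idot] using this

lemma volume_idot_preimage_eq_zero {v : Fin n → ℤ} (hv : v ≠ 0) {s : Set ℝ} (hs : s.Countable) :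
    volume ((fun x => idot x v) ⁻¹' s) = 0 := by
  rw [← Set.biUnion_of_singleton s, Set.preimage_iUnion₂]
  exact (measure_biUnion_null_iff hs).2 fun r _ => volume_idot_eq_zero hv r

end Idot

section Wave

variable {m n N : ℕ}

noncomputable def wavePotential (a : Fin N → Fin m → ℝ) (nv : Fin N → Fin n → ℤ) (c : Fin N → ℝ)
    (x : Fin n → ℝ) : Fin m → ℝ :=
  ∑ i, sawtooth (idot x (nv i) + c i) • a i

noncomputable def waveSigns (nv : Fin N → Fin n → ℤ) (c : Fin N → ℝ) (x : Fin n → ℝ) :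
    Fin N → Bool :=
  fun i => decide (Int.fract (idot x (nv i) + c i) < 1 / 2)

def waveMatrix (a : Fin N → Fin m → ℝ) (nv : Fin N → Fin n → ℤ) (ε : Fin N → Bool) :
    Matrix (Fin m) (Fin n) ℝ :=
  ∑ i, sgn (ε i) • vecMulVec (a i) fun k => (nv i k : ℝ)

lemma wavePotential_add_intCast (a : Fin N → Fin m → ℝ) (nv : Fin N → Fin n → ℤ)
    (c : Fin N → ℝ) (x : Fin n → ℝ) (k : Fin n → ℤ) :
    wavePotential a nv c (x + fun j => (k j : ℝ)) = wavePotential a nv c x := by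
  simp only [wavePotential, idot_add_intCast, add_right_comm _ (_ : ℝ) (c _), sawtooth_add_intCast]

lemma exists_lipschitzWith_wavePotential (a : Fin N → Fin m → ℝ) (nv : Fin N → Fin n → ℤ)
    (c : Fin N → ℝ) : ∃ K, LipschitzWith K (wavePotential a nv c) :=
  ⟨_, lipschitzWith_finset_sum Finset.univ fun i _ =>
    ((ContinuousLinearMap.id ℝ ℝ).smulRight (a i)).lipschitz.comp <|
      lipschitzWith_sawtooth.comp <| (idotCLM (nv i)).lipschitz.add (LipschitzWith.const (c i))⟩

lemma hasFDerivAt_sawtooth_smul {v : Fin n → ℤ} {c : ℝ} (a : Fin m → ℝ) {x : Fin n → ℝ}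
    (hx : v = 0 ∨ Int.fract (idot x v + c) ≠ 0 ∧ Int.fract (idot x v + c) ≠ 1 / 2) :
    HasFDerivAt (fun y => sawtooth (idot y v + c) • a) (LinearMap.toContinuousLinearMap
      (Matrix.toLin' (haar (idot x v + c) • vecMulVec a fun k => (v k : ℝ)))) x := by
  rcases hx with rfl | ⟨h0, hhalf⟩
  · have hzero : (vecMulVec a fun _ : Fin n => (0 : ℝ)) = 0 := by
      ext; simp [vecMulVec_apply]
    simpa [idot, hzero] using hasFDerivAt_const (𝕜 := ℝ) (sawtooth c • a) x
  · refine (((hasDerivAt_sawtooth h0 hhalf).comp_hasFDerivAt x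
      ((idotCLM v).hasFDerivAt.add_const c)).smul_const a).congr_fderiv ?_
    ext y j
    simp [Matrix.mulVec, dotProduct, vecMulVec_apply, idot, Finset.mul_sum, Finset.sum_mul]
    exact Finset.sum_congr rfl fun k _ => by ring

lemma hasFDerivAt_wavePotential (a : Fin N → Fin m → ℝ) (nv : Fin N → Fin n → ℤ)
    (c : Fin N → ℝ) {x : Fin n → ℝ} (hx : ∀ i, nv i = 0 ∨
      Int.fract (idot x (nv i) + c i) ≠ 0 ∧ Int.fract (idot x (nv i) + c i) ≠ 1 / 2) :
    HasFDerivAt (wavePotential a nv c) (LinearMap.toContinuousLinearMap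
      (Matrix.toLin' (waveMatrix a nv (waveSigns nv c x)))) x := by
  simp only [waveMatrix, waveSigns, ← haar_eq_sgn, map_sum]
  exact HasFDerivAt.fun_sum fun i _ => hasFDerivAt_sawtooth_smul (a i) (hx i)

lemma ae_gradMatrix_wavePotential (a : Fin N → Fin m → ℝ) (nv : Fin N → Fin n → ℤ)
    (c : Fin N → ℝ) :
    ∀ᵐ x, gradMatrix (wavePotential a nv c) x = waveMatrix a nv (waveSigns nv c x) := by
  have hgood : ∀ᵐ x : Fin n → ℝ, ∀ i, nv i = 0 ∨
      Int.fract (idot x (nv i) + c i) ≠ 0 ∧ Int.fract (idot x (nv i) + c i) ≠ 1 / 2 := by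
    refine ae_all_iff.2 fun i => ?_
    rcases eq_or_ne (nv i) 0 with hi | hi
    · exact Filter.Eventually.of_forall fun _ => Or.inl hi
    · refine measure_mono_null (fun x hx => ?_)
        (volume_idot_preimage_eq_zero hi (countable_setOf_fract_add_eq (c i)))
      by_contra hbad
      exact hx (Or.inr (not_or.1 hbad))
  exact hgood.mono fun x hx => gradMatrix_eq_of_hasFDerivAt (hasFDerivAt_wavePotential a nv c hx)

lemma measurable_waveSigns (nv : Fin N → Fin n → ℤ) (c : Fin N → ℝ) :
    Measurable (waveSigns nv c) := by
  refine measurable_pi_lambda _ fun i => measurable_to_bool ?_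
  have hphase : Measurable fun x : Fin n → ℝ => Int.fract (idot x (nv i) + c i) :=
    ((idotCLM (nv i)).measurable.add_const (c i)).fract
  convert measurableSet_lt hphase (measurable_const (a := (1 / 2 : ℝ))) using 1
  ext x
  simp [waveSigns]

lemma setOf_haar_eq_sgn (nv : Fin N → Fin n → ℤ) (c : Fin N → ℝ) (ε : Fin N → Bool) :
    {x | ∀ i, haar (idot x (nv i) + c i) = sgn (ε i)} = waveSigns nv c ⁻¹' {ε} := by
  ext x
  simp [haar_eq_sgn, sgn_injective.eq_iff, waveSigns, funext_iff]

end Wave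

instance (n : ℕ) : IsFiniteMeasure (volume.restrict (unitBox n)) :=
  isFiniteMeasure_restrict.2 <| by simp [unitBox, volume_pi_pi, Real.volume_Ico]

theorem stmt15_general {m n : ℕ} (f : Matrix (Fin m) (Fin n) ℝ → ℝ)
    (hqc : QuasiconvexFn f) :
    ∀ (N : ℕ) (A : Matrix (Fin m) (Fin n) ℝ) (a : Fin N → Fin m → ℝ)
      (nv : Fin N → Fin n → ℤ) (c : Fin N → ℝ),
      f A ≤ ∑ ε : Fin N → Bool,
        (volume {x : Fin n → ℝ | x ∈ unitBox n ∧
          ∀ i, haar (idot x (nv i) + c i) = sgn (ε i)}).toReal *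
        f (A + ∑ i, sgn (ε i) • vecMulVec (a i) fun k => (nv i k : ℝ)) := by
  intro N A a nv c
  obtain ⟨K, hK⟩ := exists_lipschitzWith_wavePotential a nv c
  calc f A ≤ ∫ x in unitBox n, f (A + gradMatrix (wavePotential a nv c) x) :=
        hqc A _ K hK (wavePotential_add_intCast a nv c)
    _ = ∫ x in unitBox n, f (A + waveMatrix a nv (waveSigns nv c x)) :=
        integral_congr_ae <| ae_restrict_of_ae <|
          (ae_gradMatrix_wavePotential a nv c).mono fun x hx => congrArg (f <| A + ·) hx
    _ = ∑ ε, (volume.restrict (unitBox n)).real (waveSigns nv c ⁻¹' {ε}) •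
          f (A + waveMatrix a nv ε) :=
        integral_comp_eq_sum_measureReal (measurable_waveSigns nv c) fun ε =>
          f (A + waveMatrix a nv ε)
    _ = _ := by
        refine Finset.sum_congr rfl fun ε _ => ?_
        rw [measureReal_restrict_apply (measurable_waveSigns nv c (measurableSet_singleton ε)),
          Set.inter_comm, ← setOf_haar_eq_sgn nv c ε]
        rfl

theorem stmt15 {m n : ℕ} (f : Matrix (Fin m) (Fin n) ℝ → ℝ) (hf : Continuous f)
    (hqc : QuasiconvexFn f) :
    ∀ (N : ℕ) (A : Matrix (Fin m) (Fin n) ℝ) (a : Fin N → Fin m → ℝ)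
      (nv : Fin N → Fin n → ℤ) (c : Fin N → ℝ),
      f A ≤ ∑ ε : Fin N → Bool,
        (volume {x : Fin n → ℝ | x ∈ unitBox n ∧
          ∀ i, haar (idot x (nv i) + c i) = sgn (ε i)}).toReal *
        f (A + ∑ i, sgn (ε i) • vecMulVec (a i) fun k => (nv i k : ℝ)) :=
  stmt15_general f hqc
end
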